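/- Let F ⊆ P₂(TX) be an MPVF whose barycentric projection br F is totally λ-dissipative, let Φ, Ψ ∈ F with μ := x_♯Φ, ν := x_♯Ψ, let γ ∈ Γ(μ,ν) and τ > 0. Let T_τ := (x, exp^τ)_♯Φ and T̃_τ := (x, exp^τ)_♯Ψ be the associated single-step plans, with disintegrations (T_{τ,x₀})_{x₀∈X} with respect to μ and (T̃_{τ,y₀})_{y₀∈X} with respect to ν. Define ϑ := ∫_{X×X} (δ_{x₀} ⊗ T_{τ,x₀}) ⊗ (δ_{y₀} ⊗ T̃_{τ,y₀}) dγ(x₀,y₀) ∈ P(X⁴). Then ∫ ⟨x₀−y₀, (x₁−x₀)/τ − (y₁−y₀)/τ⟩ dϑ(x₀,x₁,y₀,y₁) ≤ λ ∫ |x₀−y₀|² dγ(x₀,y₀). -/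

import Mathlib

open MeasureTheory ProbabilityTheory
open scoped ENNReal

variable {X : Type*} [NormedAddCommGroup X] [InnerProductSpace ℝ X]
  [CompleteSpace X] [SecondCountableTopology X] [MeasurableSpace X] [BorelSpace X]

/-- Membership in the Wasserstein space `P₂(Y)`. -/
def MemP2 {Y : Type*} [NormedAddCommGroup Y] [MeasurableSpace Y] (μ : Measure Y) : Prop :=
  IsProbabilityMeasure μ ∧ Integrable (fun y => ‖y‖ ^ 2) μ

/-- A multivalued probability vector field (MPVF). -/
def IsMPVF (F : Set (Measure (X × X))) : Prop :=
  F.Nonempty ∧ ∀ Φ ∈ F, MemP2 Φ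

/-- Total `λ`-dissipativity of an MPVF. -/
def TotallyDissipative (lam : ℝ) (F : Set (Measure (X × X))) : Prop :=
  ∀ Φ₀ ∈ F, ∀ Φ₁ ∈ F, ∀ ϑ : Measure ((X × X) × (X × X)),
    ϑ.map Prod.fst = Φ₀ → ϑ.map Prod.snd = Φ₁ →
    (∫ p, (inner ℝ (p.2.2 - p.1.2) (p.2.1 - p.1.1) : ℝ) ∂ϑ) ≤
      lam * ∫ p, ‖p.2.1 - p.1.1‖ ^ 2 ∂ϑ

/-- The barycentric projection of `Φ` computed from a disintegration kernel `κ`. -/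
noncomputable def brOf (Φ : Measure (X × X)) (κ : Kernel X X) : Measure (X × X) :=
  (Φ.map Prod.fst).map (fun x => (x, ∫ v, v ∂(κ x)))

/-- The barycentric projection `br F` of an MPVF `F`. -/
def brSet (F : Set (Measure (X × X))) : Set (Measure (X × X)) :=
  { Ψ | ∃ Φ ∈ F, ∃ κ : Kernel X X, IsMarkovKernel κ ∧
      (Φ.map Prod.fst).compProd κ = Φ ∧ Ψ = brOf Φ κ }

/-!
In velocity coordinates `v = (x₁ - x₀) / τ` the kernel `κ` becomes a disintegration `η` of `Φ`
itself, and `ϑ` becomes the plan gluing `η` and `η'` along `γ`, whose marginals are `Φ` and `Ψ`.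
The two velocity fibres are independent given `(x₀, y₀)`, so the integral collapses to
`∫ ⟨x₀ - y₀, b x₀ - b' y₀⟩ dγ` with `b, b'` the barycentres of `η, η'`. The image of `γ` under
`(x₀, y₀) ↦ ((x₀, b x₀), (y₀, b' y₀))` couples two elements of `br F`, so total dissipativity
bounds this by `λ ∫ |x₀ - y₀|² dγ`. Integrability comes from the second moments of `Φ` and `Ψ`.
-/

open scoped RealInnerProductSpace

namespace ProbabilityTheory

variable {α β α' β' δ δ' : Type*} [MeasurableSpace α] [MeasurableSpace β] [MeasurableSpace α']
  [MeasurableSpace β'] [MeasurableSpace δ] [MeasurableSpace δ']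

lemma Kernel.id_prod_map_id_prod (κ : Kernel α β) [IsSFiniteKernel κ] {h : α × β → δ}
    (hh : Measurable h) :
    Kernel.id ×ₖ (Kernel.id ×ₖ κ).map h = (Kernel.id ×ₖ κ).map (fun p => (p.1, h p)) := by
  ext1 x
  rw [Kernel.prod_apply, Kernel.map_apply _ hh, Kernel.map_apply _ (measurable_fst.prodMk hh),
    Kernel.prod_apply, Kernel.id_apply, Measure.dirac_prod, Measure.dirac_prod,
    Measure.map_map hh measurable_prodMk_left,
    Measure.map_map measurable_prodMk_left (hh.comp measurable_prodMk_left),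
    Measure.map_map (measurable_fst.prodMk hh) measurable_prodMk_left]
  rfl

lemma Kernel.parallelComp_map (κ : Kernel α β) [IsSFiniteKernel κ] (κ' : Kernel α' β')
    [IsSFiniteKernel κ'] {f : β → δ} {f' : β' → δ'} (hf : Measurable f) (hf' : Measurable f') :
    (κ ∥ₖ κ').map (Prod.map f f') = κ.map f ∥ₖ κ'.map f' := by
  ext1 q
  rw [Kernel.map_apply _ (hf.prodMap hf'), Kernel.parallelComp_apply, Kernel.parallelComp_apply,
    Kernel.map_apply _ hf, Kernel.map_apply _ hf', Measure.map_prod_map _ _ hf hf']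

lemma Kernel.parallelComp_map_fst (κ : Kernel α β) [IsSFiniteKernel κ] (κ' : Kernel α' β')
    [IsMarkovKernel κ'] :
    (κ ∥ₖ κ').map Prod.fst = κ.comap Prod.fst measurable_fst := by
  ext1 q
  rw [Kernel.map_apply _ measurable_fst, Kernel.parallelComp_apply, Kernel.comap_apply,
    Measure.map_fst_prod, measure_univ, one_smul]

lemma Kernel.parallelComp_map_snd (κ : Kernel α β) [IsMarkovKernel κ] (κ' : Kernel α' β')
    [IsSFiniteKernel κ'] :
    (κ ∥ₖ κ').map Prod.snd = κ'.comap Prod.snd measurable_snd := by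
  ext1 q
  rw [Kernel.map_apply _ measurable_snd, Kernel.parallelComp_apply, Kernel.comap_apply,
    Measure.map_snd_prod, measure_univ, one_smul]

lemma _root_.MeasureTheory.Measure.comap_comp (μ : Measure α) (κ : Kernel β δ) {f : α → β}
    (hf : Measurable f) : κ.comap f hf ∘ₘ μ = κ ∘ₘ μ.map f := by
  rw [← Measure.deterministic_comp_eq_map hf, Measure.comp_assoc,
    Kernel.comp_deterministic_eq_comap]

lemma _root_.MeasureTheory.Measure.integral_comp {E : Type*} [NormedAddCommGroup E]
    [NormedSpace ℝ E] {μ : Measure α} {κ : Kernel α β} {f : β → E} (hf : Integrable f (κ ∘ₘ μ)) :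
    ∫ y, f y ∂(κ ∘ₘ μ) = ∫ x, ∫ y, f y ∂κ x ∂μ := by
  rw [Measure.comp_eq_comp_const_apply] at hf ⊢
  exact Kernel.integral_comp hf

/-- The plan `∫ (δ_{x₀} ⊗ κ x₀) ⊗ (δ_{y₀} ⊗ κ' y₀) dγ(x₀, y₀)`. -/
noncomputable def gluedPlan (γ : Measure (α × α')) (κ : Kernel α β) (κ' : Kernel α' β') :
    Measure ((α × β) × (α' × β')) :=
  ((Kernel.id ×ₖ κ) ∥ₖ (Kernel.id ×ₖ κ')) ∘ₘ γ

section gluedPlan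

variable (γ : Measure (α × α')) (κ : Kernel α β) (κ' : Kernel α' β')

lemma gluedPlan_eq_bind [IsSFiniteKernel κ] [IsSFiniteKernel κ'] :
    gluedPlan γ κ κ' = γ.bind (fun q =>
      ((Measure.dirac q.1).prod (κ q.1)).prod ((Measure.dirac q.2).prod (κ' q.2))) := by
  refine congrArg (Measure.bind γ) (funext fun q => ?_)
  rw [Kernel.parallelComp_apply, Kernel.prod_apply, Kernel.prod_apply, Kernel.id_apply,
    Kernel.id_apply]

lemma map_fst_gluedPlan [SFinite γ] [IsSFiniteKernel κ] [IsMarkovKernel κ'] :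
    (gluedPlan γ κ κ').map Prod.fst = γ.map Prod.fst ⊗ₘ κ := by
  rw [gluedPlan, Measure.map_comp _ _ measurable_fst, Kernel.parallelComp_map_fst,
    Measure.comap_comp, Measure.compProd_eq_comp_prod]

lemma map_snd_gluedPlan [SFinite γ] [IsMarkovKernel κ] [IsSFiniteKernel κ'] :
    (gluedPlan γ κ κ').map Prod.snd = γ.map Prod.snd ⊗ₘ κ' := by
  rw [gluedPlan, Measure.map_comp _ _ measurable_snd, Kernel.parallelComp_map_snd,
    Measure.comap_comp, Measure.compProd_eq_comp_prod]

lemma gluedPlan_map [IsSFiniteKernel κ] [IsSFiniteKernel κ'] {h : α × β → δ} {h' : α' × β' → δ'}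
    (hh : Measurable h) (hh' : Measurable h') :
    (gluedPlan γ κ κ').map (Prod.map (fun p => (p.1, h p)) (fun p => (p.1, h' p)))
      = gluedPlan γ ((Kernel.id ×ₖ κ).map h) ((Kernel.id ×ₖ κ').map h') := by
  rw [gluedPlan, Measure.map_comp _ _ ((measurable_fst.prodMk hh).prodMap
      (measurable_fst.prodMk hh')), Kernel.parallelComp_map _ _ (measurable_fst.prodMk hh)
      (measurable_fst.prodMk hh'), ← Kernel.id_prod_map_id_prod κ hh,
    ← Kernel.id_prod_map_id_prod κ' hh']
  rfl

end gluedPlan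

lemma _root_.MeasureTheory.Measure.compProd_id_prod_map (μ : Measure α) [SFinite μ]
    (κ : Kernel α β) [IsSFiniteKernel κ] {h : α × β → δ} (hh : Measurable h) :
    μ ⊗ₘ (Kernel.id ×ₖ κ).map h = (μ ⊗ₘ κ).map (fun p => (p.1, h p)) := by
  rw [Measure.compProd_eq_comp_prod, Kernel.id_prod_map_id_prod κ hh,
    ← Measure.map_comp _ _ (measurable_fst.prodMk hh), ← Measure.compProd_eq_comp_prod]

section InnerProductSpace

variable {α E : Type*} [MeasurableSpace α] [NormedAddCommGroup E] [InnerProductSpace ℝ E]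

lemma _root_.MeasureTheory.MemLp.integrable_inner
    {μ : Measure α} {f g : α → E} (hf : MemLp f 2 μ) (hg : MemLp g 2 μ) :
    Integrable (fun a => ⟪f a, g a⟫) μ :=
  (L2.integrable_inner (𝕜 := ℝ) (hf.toLp f) (hg.toLp g)).congr <| by
    filter_upwards [hf.coeFn_toLp, hg.coeFn_toLp] with a hfa hga
    rw [hfa, hga]

variable [MeasurableSpace E]

lemma integral_fst_sub_snd_prod (P Q : Measure E) [IsProbabilityMeasure P]
    [IsProbabilityMeasure Q] (hP : Integrable id P) (hQ : Integrable id Q) :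
    ∫ ab, ab.1 - ab.2 ∂(P.prod Q) = ∫ a, a ∂P - ∫ b, b ∂Q := by
  have h₁ : Integrable (fun ab : E × E => ab.1) (P.prod Q) := hP.comp_fst Q
  have h₂ : Integrable (fun ab : E × E => ab.2) (P.prod Q) := hQ.comp_snd P
  rw [integral_sub h₁ h₂]
  simpa using congrArg₂ (· - ·) (integral_fun_fst (ν := Q) (fun a : E => a))
    (integral_fun_snd (μ := P) (fun b : E => b))

variable [BorelSpace E] [SecondCountableTopology E]

lemma integral_inner_dirac_prod [CompleteSpace E] (x y : E) (P Q : Measure E)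
    [IsProbabilityMeasure P] [IsProbabilityMeasure Q] (hP : Integrable id P)
    (hQ : Integrable id Q) :
    ∫ p, ⟪p.1.1 - p.2.1, p.1.2 - p.2.2⟫
        ∂((Measure.dirac x).prod P).prod ((Measure.dirac y).prod Q)
      = ⟪x - y, ∫ a, a ∂P - ∫ b, b ∂Q⟫ := by
  rw [Measure.dirac_prod, Measure.dirac_prod,
    Measure.map_prod_map _ _ measurable_prodMk_left measurable_prodMk_left,
    integral_map (measurable_prodMk_left.prodMap measurable_prodMk_left).aemeasurable
      (by fun_prop : Continuous fun p : (E × E) × (E × E) =>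
        ⟪p.1.1 - p.2.1, p.1.2 - p.2.2⟫).aestronglyMeasurable,
    ← integral_fst_sub_snd_prod P Q hP hQ]
  exact integral_inner ((hP.comp_fst Q).sub (hQ.comp_snd P)) (x - y)

lemma integrable_inner_of_memLp_map {Θ : Measure ((E × E) × (E × E))}
    (h₁ : MemLp id 2 (Θ.map Prod.fst)) (h₂ : MemLp id 2 (Θ.map Prod.snd)) :
    Integrable (fun p => ⟪p.1.1 - p.2.1, p.1.2 - p.2.2⟫) Θ := by
  have hΘ : MemLp id 2 Θ := MemLp.of_fst_snd
    ⟨(memLp_map_measure_iff aestronglyMeasurable_id measurable_fst.aemeasurable).1 h₁,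
      (memLp_map_measure_iff aestronglyMeasurable_id measurable_snd.aemeasurable).1 h₂⟩
  exact (hΘ.fst.fst.sub hΘ.snd.fst).integrable_inner (hΘ.fst.snd.sub hΘ.snd.snd)

lemma integral_inner_gluedPlan [CompleteSpace E] (γ : Measure (E × E)) [IsFiniteMeasure γ]
    (η η' : Kernel E E) [IsMarkovKernel η] [IsMarkovKernel η']
    (h₁ : MemLp id 2 (γ.map Prod.fst ⊗ₘ η))
    (h₂ : MemLp id 2 (γ.map Prod.snd ⊗ₘ η')) :
    ∫ p, ⟪p.1.1 - p.2.1, p.1.2 - p.2.2⟫ ∂gluedPlan γ η η'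
      = ∫ q, ⟪q.1 - q.2, (∫ v, v ∂η q.1) - ∫ v, v ∂η' q.2⟫ ∂γ := by
  have hInt := integrable_inner_of_memLp_map (Θ := gluedPlan γ η η')
    (by rwa [map_fst_gluedPlan]) (by rwa [map_snd_gluedPlan])
  have hη : ∀ᵐ q ∂γ, Integrable id (η q.1) := ae_of_ae_map measurable_fst.aemeasurable
    ((Measure.integrable_compProd_iff measurable_snd.aestronglyMeasurable).1
      (h₁.snd.integrable one_le_two)).1
  have hη' : ∀ᵐ q ∂γ, Integrable id (η' q.2) := ae_of_ae_map measurable_snd.aemeasurable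
    ((Measure.integrable_compProd_iff measurable_snd.aestronglyMeasurable).1
      (h₂.snd.integrable one_le_two)).1
  rw [gluedPlan, Measure.integral_comp hInt]
  refine integral_congr_ae ?_
  filter_upwards [hη, hη'] with q hq hq'
  rw [Kernel.parallelComp_apply, Kernel.prod_apply, Kernel.prod_apply, Kernel.id_apply,
    Kernel.id_apply]
  exact integral_inner_dirac_prod q.1 q.2 _ _ hq hq'

lemma TotallyDissipative.integral_inner_le {lam : ℝ} {G : Set (Measure (E × E))}
    (hG : TotallyDissipative lam G) (γ : Measure (E × E)) {b b' : E → E} (hb : Measurable b)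
    (hb' : Measurable b') (hbG : (γ.map Prod.fst).map (fun x => (x, b x)) ∈ G)
    (hb'G : (γ.map Prod.snd).map (fun y => (y, b' y)) ∈ G) :
    ∫ q, ⟪q.1 - q.2, b q.1 - b' q.2⟫ ∂γ ≤ lam * ∫ q, ‖q.1 - q.2‖ ^ 2 ∂γ := by
  set T : E × E → (E × E) × (E × E) := fun q => ((q.1, b q.1), (q.2, b' q.2))
  have hT : Measurable T := (measurable_fst.prodMk (hb.comp measurable_fst)).prodMk
    (measurable_snd.prodMk (hb'.comp measurable_snd))
  have hdiss := hG _ hbG _ hb'G (γ.map T)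
    (by rw [Measure.map_map measurable_fst hT, Measure.map_map (by fun_prop) measurable_fst]; rfl)
    (by rw [Measure.map_map measurable_snd hT, Measure.map_map (by fun_prop) measurable_snd]; rfl)
  rw [integral_map hT.aemeasurable (by fun_prop),
    integral_map hT.aemeasurable (by fun_prop)] at hdiss
  convert hdiss using 2
  · ext q
    rw [← inner_neg_neg, neg_sub, neg_sub, real_inner_comm]
  · simp only [T, norm_sub_rev]

lemma compProd_map_velocity {Φ : Measure (E × E)} {μ : Measure E} [SFinite μ] {κ : Kernel E E}
    [IsSFiniteKernel κ] {τ : ℝ} (hτ : τ ≠ 0)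
    (hκ : μ ⊗ₘ κ = Φ.map (fun z : E × E => (z.1, z.1 + τ • z.2))) :
    μ ⊗ₘ (Kernel.id ×ₖ κ).map (fun p : E × E => τ⁻¹ • (p.2 - p.1)) = Φ := by
  rw [Measure.compProd_id_prod_map _ _ (by fun_prop), hκ,
    Measure.map_map (by fun_prop) (by fun_prop)]
  convert Measure.map_id
  ext z <;> simp [smul_smul, hτ]

end InnerProductSpace

end ProbabilityTheory

/-- Let `F` be an MPVF whose barycentric projection is totally
`λ`-dissipative, `Φ, Ψ ∈ F` with position marginals `μ, ν`, `γ ∈ Γ(μ,ν)` and `τ > 0`.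
Let `T_τ = (x, exp^τ)_♯Φ` and `T̃_τ = (x, exp^τ)_♯Ψ` be the single-step plans, with
disintegration kernels `κ` (w.r.t. `μ`) and `κ'` (w.r.t. `ν`).  For the glued plan
`ϑ := ∫ (δ_{x₀} ⊗ T_{τ,x₀}) ⊗ (δ_{y₀} ⊗ T̃_{τ,y₀}) dγ(x₀,y₀)` (in variables
`((x₀,x₁),(y₀,y₁))`) one has
`∫ ⟨x₀−y₀, (x₁−x₀)/τ − (y₁−y₀)/τ⟩ dϑ ≤ λ ∫ |x₀−y₀|² dγ`. -/
theorem stmt1 (lam : ℝ) (F : Set (Measure (X × X)))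
    (hF : IsMPVF F) (hbr : TotallyDissipative lam (brSet F))
    (Φ Ψ : Measure (X × X)) (hΦ : Φ ∈ F) (hΨ : Ψ ∈ F)
    (τ : ℝ) (hτ : 0 < τ)
    (γ : Measure (X × X)) [IsProbabilityMeasure γ]
    (hγ1 : γ.map Prod.fst = Φ.map Prod.fst) (hγ2 : γ.map Prod.snd = Ψ.map Prod.fst)
    (κ κ' : Kernel X X) [IsMarkovKernel κ] [IsMarkovKernel κ']
    (hκ : (Φ.map Prod.fst).compProd κ
        = Φ.map (fun z : X × X => (z.1, z.1 + τ • z.2)))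
    (hκ' : (Ψ.map Prod.fst).compProd κ'
        = Ψ.map (fun z : X × X => (z.1, z.1 + τ • z.2)))
    (ϑ : Measure ((X × X) × (X × X)))
    (hϑ : ϑ = γ.bind (fun q =>
      ((Measure.dirac q.1).prod (κ q.1)).prod ((Measure.dirac q.2).prod (κ' q.2)))) :
    (∫ p, (inner ℝ (p.1.1 - p.2.1)
        (τ⁻¹ • (p.1.2 - p.1.1) - τ⁻¹ • (p.2.2 - p.2.1)) : ℝ) ∂ϑ) ≤
      lam * ∫ q, ‖q.1 - q.2‖ ^ 2 ∂γ := by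
  set η := (Kernel.id ×ₖ κ).map fun p : X × X => τ⁻¹ • (p.2 - p.1)
  set η' := (Kernel.id ×ₖ κ').map fun p : X × X => τ⁻¹ • (p.2 - p.1)
  have : IsMarkovKernel η := Kernel.IsMarkovKernel.map _ (by fun_prop)
  have : IsMarkovKernel η' := Kernel.IsMarkovKernel.map _ (by fun_prop)
  have hη : γ.map Prod.fst ⊗ₘ η = Φ := compProd_map_velocity hτ.ne' (hγ1 ▸ hκ)
  have hη' : γ.map Prod.snd ⊗ₘ η' = Ψ := compProd_map_velocity hτ.ne' (hγ2 ▸ hκ')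
  have hϑη : ϑ.map (Prod.map (fun p : X × X => (p.1, τ⁻¹ • (p.2 - p.1)))
      (fun p : X × X => (p.1, τ⁻¹ • (p.2 - p.1)))) = gluedPlan γ η η' := by
    rw [hϑ, ← gluedPlan_eq_bind, gluedPlan_map _ _ _ (by fun_prop) (by fun_prop)]
  have hmem : ∀ Φ₀ ∈ F, MemLp id 2 Φ₀ := fun Φ₀ h₀ =>
    (memLp_two_iff_integrable_sq_norm aestronglyMeasurable_id).2 (hF.2 Φ₀ h₀).2
  calc _ = ∫ p, ⟪p.1.1 - p.2.1, p.1.2 - p.2.2⟫ ∂gluedPlan γ η η' := by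
        rw [← hϑη, integral_map (by fun_prop) (by fun_prop)]
        rfl
    _ = ∫ q, ⟪q.1 - q.2, (∫ v, v ∂η q.1) - ∫ v, v ∂η' q.2⟫ ∂γ :=
        integral_inner_gluedPlan γ η η' (hη ▸ hmem Φ hΦ) (hη' ▸ hmem Ψ hΨ)
    _ ≤ lam * ∫ q, ‖q.1 - q.2‖ ^ 2 ∂γ :=
        hbr.integral_inner_le γ stronglyMeasurable_id.integral_kernel.measurable
          stronglyMeasurable_id.integral_kernel.measurable
          (by rw [hγ1]; exact ⟨Φ, hΦ, η, inferInstance, hγ1 ▸ hη, rfl⟩)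
          (by rw [hγ2]; exact ⟨Ψ, hΨ, η', inferInstance, hγ2 ▸ hη', rfl⟩)
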